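/- In the one-sided one-parameter exponential family setting, for any probability distribution W1 supported on {θ ∈ Θ1 : θ ≥ δ}, D(P_{W1} ‖ P_0) ≥ D(P_δ ‖ P_0), where P_{W1} is the Bayes marginal ∫P_θ dW1(θ). -/

import Mathlib

set_option autoImplicit false
set_option maxHeartbeats 1000000

open MeasureTheory
open scoped ENNReal

/-- In the one-sided one-parameter exponential family setting, for any prior `W1`
supported on `{θ ∈ Θ : θ ≥ δ}`, the Bayes marginal `P_{W1}` (with density
`p_{W1} z = ∫ p θ z dW1(θ)`) satisfies `D(P_{W1} ‖ P_0) ≥ D(P_δ ‖ P_0)`: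
the information projection onto `{P_0}` is attained by the point mass at `δ`. -/
theorem stmt16 {α : Type*} [MeasurableSpace α] (lam : Measure α) [SigmaFinite lam]
    (Θ : Set ℝ) (hΘ : Θ.OrdConnected)
    (φ p0 : α → ℝ) (hφ : Measurable φ) (hp0 : Measurable p0)
    (hp0nn : ∀ x, 0 ≤ p0 x)
    (Z : ℝ → ℝ) (hZpos : ∀ θ ∈ Θ, 0 < Z θ)
    (p : ℝ → α → ℝ)
    (hpdef : ∀ θ x, p θ x = Real.exp (θ * φ x) * p0 x / Z θ)
    (hnorm : ∀ θ ∈ Θ, ∫⁻ x, ENNReal.ofReal (p θ x) ∂lam = 1)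
    (P : ℝ → Measure α)
    (hPdef : ∀ θ, P θ = lam.withDensity fun x => ENNReal.ofReal (p θ x))
    (hφint : ∀ θ ∈ Θ, Integrable φ (P θ))
    (h0 : (0 : ℝ) ∈ Θ)
    (δ : ℝ) (hδpos : 0 < δ) (hδΘ : δ ∈ Θ)
    (W1 : Measure ℝ) [IsProbabilityMeasure W1]
    (hW1supp : W1 {θ : ℝ | ¬(θ ∈ Θ ∧ δ ≤ θ)} = 0)
    (pW : α → ℝ) (hpW : ∀ x, pW x = ∫ θ, p θ x ∂W1)
    (PW : Measure α)
    (hPW : PW = lam.withDensity fun x => ENNReal.ofReal (pW x))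
    (hKLW : Integrable (fun x => Real.log (pW x / p 0 x)) PW)
    (hKLδ : Integrable (fun x => Real.log (p δ x / p 0 x)) (P δ)) :
    ∫ x, Real.log (p δ x / p 0 x) ∂(P δ) ≤
      ∫ x, Real.log (pW x / p 0 x) ∂PW := by
  have hZ0 : 0 < Z 0 := hZpos 0 h0
  have hZδ : 0 < Z δ := hZpos δ hδΘ
  have hae : ∀ᵐ θ ∂W1, θ ∈ Θ ∧ δ ≤ θ := by
    rw [MeasureTheory.ae_iff]; exact hW1supp
  have hpnn : ∀ θ, θ ∈ Θ → ∀ x, 0 ≤ p θ x := fun θ hθ x => by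
    rw [hpdef]
    exact div_nonneg (mul_nonneg (Real.exp_pos _).le (hp0nn x)) (hZpos θ hθ).le
  have hpmeas : ∀ θ, Measurable (p θ) := fun θ => by
    have : p θ = fun x => Real.exp (θ * φ x) * p0 x / Z θ := funext (hpdef θ)
    rw [this]
    exact ((Real.measurable_exp.comp (hφ.const_mul θ)).mul hp0).div_const _
  -- measurable version of Z on Θ
  set ZM : ℝ → ℝ := fun θ => (∫⁻ x, ENNReal.ofReal (Real.exp (θ * φ x) * p0 x) ∂lam).toReal
    with hZMdef
  have hEP : ∀ θ, θ ∈ Θ →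
      ∫⁻ x, ENNReal.ofReal (Real.exp (θ * φ x) * p0 x) ∂lam = ENNReal.ofReal (Z θ) := by
    intro θ hθ
    have h1 := hnorm θ hθ
    have heq : ∀ x, ENNReal.ofReal (p θ x)
        = ENNReal.ofReal (Real.exp (θ * φ x) * p0 x) * ENNReal.ofReal (Z θ)⁻¹ := by
      intro x
      rw [hpdef, div_eq_mul_inv, ENNReal.ofReal_mul (mul_nonneg (Real.exp_pos _).le (hp0nn x))]
    rw [lintegral_congr heq, lintegral_mul_const' _ _ (by simp)] at h1
    rw [ENNReal.ofReal_inv_of_pos (hZpos θ hθ), ← div_eq_mul_inv] at h1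
    exact (ENNReal.div_eq_one_iff (by simp [hZpos θ hθ]) ENNReal.ofReal_ne_top).mp h1
  have hZMeq : ∀ θ, θ ∈ Θ → ZM θ = Z θ := by
    intro θ hθ
    rw [hZMdef]
    simp only
    rw [hEP θ hθ, ENNReal.toReal_ofReal (hZpos θ hθ).le]
  have hZMmeas : Measurable ZM := by
    apply Measurable.ennreal_toReal
    apply Measurable.lintegral_prod_right (f := fun θ x => ENNReal.ofReal (Real.exp (θ * φ x) * p0 x))
    exact ENNReal.measurable_ofReal.comp
      ((Real.measurable_exp.comp (measurable_fst.mul (hφ.comp measurable_snd))).mul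
        (hp0.comp measurable_snd))
  set q : ℝ → α → ℝ := fun θ x => Real.exp (θ * φ x) * p0 x / ZM θ with hqdef
  have hqp : ∀ θ, θ ∈ Θ → ∀ x, q θ x = p θ x := by
    intro θ hθ x
    rw [hqdef]; simp only
    rw [hZMeq θ hθ, hpdef]
  have hqnn : ∀ θ x, 0 ≤ q θ x := fun θ x =>
    div_nonneg (mul_nonneg (Real.exp_pos _).le (hp0nn x)) ENNReal.toReal_nonneg
  have hqmeasθ : ∀ x, Measurable (fun θ => q θ x) := fun x =>
    ((Real.measurable_exp.comp (measurable_id.mul_const (φ x))).mul_const (p0 x)).div hZMmeas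
  set F : α → ℝ≥0∞ := fun x => ∫⁻ θ, ENNReal.ofReal (q θ x) ∂W1 with hFdef
  have hqprodmeas : Measurable (fun z : α × ℝ => ENNReal.ofReal (q z.2 z.1)) := by
    apply ENNReal.measurable_ofReal.comp
    exact ((Real.measurable_exp.comp (measurable_snd.mul (hφ.comp measurable_fst))).mul
      (hp0.comp measurable_fst)).div (hZMmeas.comp measurable_snd)
  have hFmeas : Measurable F := by
    apply Measurable.lintegral_prod_right (f := fun x θ => ENNReal.ofReal (q θ x))
    exact hqprodmeas
  have hpWq : ∀ x, pW x = ∫ θ, q θ x ∂W1 := by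
    intro x
    rw [hpW x]
    apply integral_congr_ae
    filter_upwards [hae] with θ hθ
    exact (hqp θ hθ.1 x).symm
  have hpWF : ∀ x, pW x = (F x).toReal := by
    intro x
    rw [hpWq x, hFdef]
    exact integral_eq_lintegral_of_nonneg_ae (ae_of_all _ fun θ => hqnn θ x)
      (hqmeasθ x).aestronglyMeasurable
  have hpWnn : ∀ x, 0 ≤ pW x := fun x => (hpWF x) ▸ ENNReal.toReal_nonneg
  have hpWmeas : Measurable pW := by
    have : pW = fun x => (F x).toReal := funext hpWF
    rw [this]; exact hFmeas.ennreal_toReal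
  have hFone : ∫⁻ x, F x ∂lam = 1 := by
    rw [hFdef]
    simp only
    rw [lintegral_lintegral_swap hqprodmeas.aemeasurable]
    have : ∀ᵐ θ ∂W1, ∫⁻ x, ENNReal.ofReal (q θ x) ∂lam = 1 := by
      filter_upwards [hae] with θ hθ
      rw [lintegral_congr (fun x => by rw [hqp θ hθ.1])]
      exact hnorm θ hθ.1
    rw [lintegral_congr_ae this]
    simp
  have hFfin : ∀ᵐ x ∂lam, F x < ⊤ := ae_lt_top hFmeas (by rw [hFone]; exact ENNReal.one_ne_top)
  have hofRealpW : ∀ᵐ x ∂lam, ENNReal.ofReal (pW x) = F x := by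
    filter_upwards [hFfin] with x hx
    rw [hpWF x]; exact ENNReal.ofReal_toReal hx.ne
  have hpWl1 : ∫⁻ x, ENNReal.ofReal (pW x) ∂lam = 1 := by
    rw [lintegral_congr_ae hofRealpW, hFone]
  have hpWint : Integrable pW lam := by
    refine ⟨hpWmeas.aestronglyMeasurable, ?_⟩
    rw [hasFiniteIntegral_iff_norm]
    have : ∀ x, ENNReal.ofReal ‖pW x‖ = ENNReal.ofReal (pW x) := fun x => by
      rw [Real.norm_eq_abs, abs_of_nonneg (hpWnn x)]
    rw [lintegral_congr this, hpWl1]; exact ENNReal.one_lt_top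
  have hpWone : ∫ x, pW x ∂lam = 1 := by
    rw [integral_eq_lintegral_of_nonneg_ae (ae_of_all _ hpWnn) hpWmeas.aestronglyMeasurable,
      hpWl1]
    simp
  have hpθint : ∀ θ, θ ∈ Θ → Integrable (p θ) lam := by
    intro θ hθ
    refine ⟨(hpmeas θ).aestronglyMeasurable, ?_⟩
    rw [hasFiniteIntegral_iff_norm]
    have : ∀ x, ENNReal.ofReal ‖p θ x‖ = ENNReal.ofReal (p θ x) := fun x => by
      rw [Real.norm_eq_abs, abs_of_nonneg (hpnn θ hθ x)]
    rw [lintegral_congr this, hnorm θ hθ]; exact ENNReal.one_lt_top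
  have hpθone : ∀ θ, θ ∈ Θ → ∫ x, p θ x ∂lam = 1 := by
    intro θ hθ
    rw [integral_eq_lintegral_of_nonneg_ae (ae_of_all _ (hpnn θ hθ)) (hpmeas θ).aestronglyMeasurable,
      hnorm θ hθ]
    simp
  have hφpθ : ∀ θ, θ ∈ Θ → Integrable (fun x => φ x * p θ x) lam := by
    intro θ hθ
    have h1 := hφint θ hθ
    rw [hPdef θ, integrable_withDensity_iff ((hpmeas θ).ennreal_ofReal)
      (ae_of_all _ fun x => ENNReal.ofReal_lt_top)] at h1
    have : (fun x => φ x * (ENNReal.ofReal (p θ x)).toReal) = fun x => φ x * p θ x := by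
      funext x; rw [ENNReal.toReal_ofReal (hpnn θ hθ x)]
    rwa [this] at h1
  -- mean monotonicity
  have hmono : ∀ θ, θ ∈ Θ → δ ≤ θ →
      ∫ x, φ x * p δ x ∂lam ≤ ∫ x, φ x * p θ x ∂lam := by
    intro θ hθ hδθ
    rcases eq_or_lt_of_le hδθ with rfl | hlt
    · exact le_refl _
    have hZθ : 0 < Z θ := hZpos θ hθ
    have hθδ : 0 < θ - δ := by linarith
    set t : ℝ := Real.log (Z θ / Z δ) / (θ - δ) with htdef
    have hcross : ∀ s : ℝ, t ≤ s → Real.exp (δ * s) * Z θ ≤ Real.exp (θ * s) * Z δ := by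
      intro s hs
      have h1 : Real.log (Z θ / Z δ) ≤ (θ - δ) * s := by
        rw [htdef] at hs
        calc Real.log (Z θ / Z δ) = (Real.log (Z θ / Z δ) / (θ - δ)) * (θ - δ) := by
              field_simp
          _ ≤ s * (θ - δ) := by
              apply mul_le_mul_of_nonneg_right hs hθδ.le
          _ = (θ - δ) * s := by ring
      have h2 : Z θ / Z δ ≤ Real.exp ((θ - δ) * s) := by
        rw [← Real.exp_log (div_pos hZθ hZδ)]
        exact Real.exp_le_exp.2 h1
      have h3 : Z θ ≤ Real.exp ((θ - δ) * s) * Z δ := by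
        rw [div_le_iff₀ hZδ] at h2; linarith
      have h4 : Real.exp (δ * s) * Real.exp ((θ - δ) * s) = Real.exp (θ * s) := by
        rw [← Real.exp_add]; ring_nf
      nlinarith [Real.exp_pos (δ * s)]
    have hcross' : ∀ s : ℝ, s ≤ t → Real.exp (θ * s) * Z δ ≤ Real.exp (δ * s) * Z θ := by
      intro s hs
      have h1 : (θ - δ) * s ≤ Real.log (Z θ / Z δ) := by
        rw [htdef] at hs
        calc (θ - δ) * s = s * (θ - δ) := by ring
          _ ≤ (Real.log (Z θ / Z δ) / (θ - δ)) * (θ - δ) :=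
              mul_le_mul_of_nonneg_right hs hθδ.le
          _ = Real.log (Z θ / Z δ) := by field_simp
      have h2 : Real.exp ((θ - δ) * s) ≤ Z θ / Z δ := by
        rw [← Real.exp_log (div_pos hZθ hZδ)]
        exact Real.exp_le_exp.2 h1
      have h3 : Real.exp ((θ - δ) * s) * Z δ ≤ Z θ := by
        rw [le_div_iff₀ hZδ] at h2; linarith
      have h4 : Real.exp (δ * s) * Real.exp ((θ - δ) * s) = Real.exp (θ * s) := by
        rw [← Real.exp_add]; ring_nf
      nlinarith [Real.exp_pos (δ * s)]
    have key : ∀ x, 0 ≤ (φ x - t) * (p θ x - p δ x) := by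
      intro x
      rcases le_total t (φ x) with h | h
      · apply mul_nonneg (by linarith)
        have := hcross (φ x) h
        rw [sub_nonneg, hpdef θ x, hpdef δ x, div_le_div_iff₀ hZδ hZθ]
        nlinarith [hp0nn x]
      · have h2 : p θ x - p δ x ≤ 0 := by
          have := hcross' (φ x) h
          rw [sub_nonpos, hpdef θ x, hpdef δ x, div_le_div_iff₀ hZθ hZδ]
          nlinarith [hp0nn x]
        nlinarith
    have hint : Integrable (fun x => (φ x - t) * (p θ x - p δ x)) lam := by
      have heq : (fun x => (φ x - t) * (p θ x - p δ x))
          = fun x => (φ x * p θ x - φ x * p δ x) - (t * p θ x - t * p δ x) := by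
        funext x; ring
      rw [heq]
      exact ((hφpθ θ hθ).sub (hφpθ δ hδΘ)).sub
        (((hpθint θ hθ).const_mul t).sub ((hpθint δ hδΘ).const_mul t))
    have hnn : 0 ≤ ∫ x, (φ x - t) * (p θ x - p δ x) ∂lam := integral_nonneg key
    have iφθ := hφpθ θ hθ
    have iφδ := hφpθ δ hδΘ
    have itθ : Integrable (fun x => t * p θ x) lam := (hpθint θ hθ).const_mul t
    have itδ : Integrable (fun x => t * p δ x) lam := (hpθint δ hδΘ).const_mul t
    have iA : Integrable (fun x => φ x * p θ x - φ x * p δ x) lam := iφθ.sub iφδ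
    have iB : Integrable (fun x => t * p θ x - t * p δ x) lam := itθ.sub itδ
    have hexp : ∫ x, (φ x - t) * (p θ x - p δ x) ∂lam
        = (∫ x, φ x * p θ x ∂lam - ∫ x, φ x * p δ x ∂lam)
          - (t * ∫ x, p θ x ∂lam - t * ∫ x, p δ x ∂lam) := by
      rw [show (fun x => (φ x - t) * (p θ x - p δ x))
          = fun x => (φ x * p θ x - φ x * p δ x) - (t * p θ x - t * p δ x) from
          funext fun x => by ring]
      rw [integral_sub iA iB, integral_sub iφθ iφδ, integral_sub itθ itδ,
        integral_const_mul, integral_const_mul]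
    rw [hexp, hpθone θ hθ, hpθone δ hδΘ] at hnn
    linarith
  set c : ℝ := Real.log (Z 0) - Real.log (Z δ) with hcdef
  have hp0fam : ∀ x, p 0 x = p0 x / Z 0 := fun x => by rw [hpdef]; simp
  have hpδpos : ∀ x, 0 < p0 x → 0 < p δ x := by
    intro x hx
    rw [hpdef]
    positivity
  have hpδ0 : ∀ x, p0 x = 0 → p δ x = 0 := fun x hx => by rw [hpdef, hx]; simp
  have hpW0 : ∀ x, p0 x = 0 → pW x = 0 := by
    intro x hx
    rw [hpW x]
    have : ∀ θ : ℝ, p θ x = 0 := fun θ => by rw [hpdef, hx]; simp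
    simp [this]
  have hlograt : ∀ x, 0 < p0 x → Real.log (p δ x / p 0 x) = δ * φ x + c := by
    intro x hx
    have h1 : Real.log (p δ x) = δ * φ x + Real.log (p0 x) - Real.log (Z δ) := by
      rw [hpdef, Real.log_div (by positivity) hZδ.ne', Real.log_mul (Real.exp_ne_zero _) hx.ne',
        Real.log_exp]
    have h2 : Real.log (p 0 x) = Real.log (p0 x) - Real.log (Z 0) := by
      rw [hp0fam, Real.log_div hx.ne' hZ0.ne']
    rw [Real.log_div (hpδpos x hx).ne' (by rw [hp0fam]; positivity), h1, h2, hcdef]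
    ring
  have hmaster : ∀ x, (pW x - p δ x) + pW x * (δ * φ x + c)
      ≤ pW x * Real.log (pW x / p 0 x) := by
    intro x
    rcases eq_or_lt_of_le (hp0nn x) with hx0 | hx0
    · rw [hpδ0 x hx0.symm, hpW0 x hx0.symm]
      simp
    rcases eq_or_lt_of_le (hpWnn x) with hW0 | hWpos
    · rw [← hW0]
      simp
      linarith [hpδpos x hx0]
    have hpδp := hpδpos x hx0
    have hp0famp : 0 < p 0 x := by rw [hp0fam]; positivity
    have hlog : Real.log (pW x / p 0 x)
        = (Real.log (pW x) - Real.log (p δ x)) + Real.log (p δ x / p 0 x) := by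
      rw [Real.log_div hWpos.ne' hp0famp.ne', Real.log_div hpδp.ne' hp0famp.ne']
      ring
    have hgibbs : Real.log (p δ x) - Real.log (pW x) ≤ p δ x / pW x - 1 := by
      have h := Real.log_le_sub_one_of_pos (div_pos hpδp hWpos)
      rwa [Real.log_div hpδp.ne' hWpos.ne'] at h
    have h2 : pW x * (Real.log (p δ x) - Real.log (pW x)) ≤ pW x * (p δ x / pW x - 1) :=
      mul_le_mul_of_nonneg_left hgibbs hWpos.le
    have h3 : pW x * (p δ x / pW x - 1) = p δ x - pW x := by
      field_simp
    rw [hlog, hlograt x hx0]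
    nlinarith
  -- transfer of KL integrals to lam
  have hKL1 : Integrable (fun x => pW x * Real.log (pW x / p 0 x)) lam := by
    rw [hPW, integrable_withDensity_iff hpWmeas.ennreal_ofReal
      (ae_of_all _ fun x => ENNReal.ofReal_lt_top)] at hKLW
    have : (fun x => Real.log (pW x / p 0 x) * (ENNReal.ofReal (pW x)).toReal)
        = fun x => pW x * Real.log (pW x / p 0 x) := by
      funext x; rw [ENNReal.toReal_ofReal (hpWnn x), mul_comm]
    rwa [this] at hKLW
  have hLval : ∫ x, Real.log (pW x / p 0 x) ∂PW
      = ∫ x, pW x * Real.log (pW x / p 0 x) ∂lam := by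
    rw [hPW]
    rw [show (fun x => ENNReal.ofReal (pW x)) = fun x => ((pW x).toNNReal : ℝ≥0∞) from rfl]
    rw [integral_withDensity_eq_integral_smul (by exact hpWmeas.real_toNNReal) _]
    congr 1
    funext x
    rw [NNReal.smul_def, smul_eq_mul, Real.coe_toNNReal _ (hpWnn x)]
  have hDval : ∫ x, Real.log (p δ x / p 0 x) ∂(P δ)
      = ∫ x, p δ x * Real.log (p δ x / p 0 x) ∂lam := by
    rw [hPdef δ]
    rw [show (fun x => ENNReal.ofReal (p δ x)) = fun x => ((p δ x).toNNReal : ℝ≥0∞) from rfl]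
    rw [integral_withDensity_eq_integral_smul (by exact (hpmeas δ).real_toNNReal) _]
    congr 1
    funext x
    rw [NNReal.smul_def, smul_eq_mul, Real.coe_toNNReal _ (hpnn δ hδΘ x)]
  set mδ : ℝ := ∫ x, φ x * p δ x ∂lam with hmδdef
  have hDeq : ∫ x, p δ x * Real.log (p δ x / p 0 x) ∂lam = δ * mδ + c := by
    have heq : (fun x => p δ x * Real.log (p δ x / p 0 x))
        = fun x => δ * (φ x * p δ x) + c * p δ x := by
      funext x
      rcases eq_or_lt_of_le (hp0nn x) with hx0 | hx0
      · rw [hpδ0 x hx0.symm]; ring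
      · rw [hlograt x hx0]; ring
    rw [heq, integral_add ((hφpθ δ hδΘ).const_mul δ) ((hpθint δ hδΘ).const_mul c),
      integral_const_mul, integral_const_mul, hpθone δ hδΘ, hmδdef]
    ring
  -- choose a reference point x₀
  have hx₀ : ∃ x₀, 0 < F x₀ ∧ F x₀ < ⊤ := by
    by_contra hcon
    push_neg at hcon
    have hz : ∀ᵐ x ∂lam, F x = 0 := by
      filter_upwards [hFfin] with x hx
      rcases eq_or_lt_of_le (zero_le : 0 ≤ F x) with h | h
      · exact h.symm
      · exact absurd (hcon x h) (not_le.2 hx)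
    rw [lintegral_congr_ae hz] at hFone
    simp at hFone
  obtain ⟨x₀, hF0pos, hF0fin⟩ := hx₀
  have hp0x₀ : 0 < p0 x₀ := by
    rcases eq_or_lt_of_le (hp0nn x₀) with h | h
    · exfalso
      have hq0 : ∀ θ : ℝ, q θ x₀ = 0 := fun θ => by
        rw [hqdef]; simp only; rw [← h]; simp
      have : F x₀ = 0 := by
        rw [hFdef]; simp only
        rw [lintegral_congr (fun θ => by rw [hq0 θ])]
        simp
      exact absurd this hF0pos.ne'
    · exact h
  set CC : ℝ := pW x₀ / (p0 x₀ * Real.exp (δ * φ x₀)) with hCCdef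
  have hCCnn : 0 ≤ CC := div_nonneg (hpWnn x₀) (by positivity)
  have hcomp : ∀ x, φ x ≤ φ x₀ → pW x ≤ (Z δ * CC) * p δ x := by
    intro x hle
    set r : ℝ := p0 x * Real.exp (δ * φ x) / (p0 x₀ * Real.exp (δ * φ x₀)) with hrdef
    have hrnn : 0 ≤ r := div_nonneg (mul_nonneg (hp0nn x) (Real.exp_pos _).le) (by positivity)
    have hθwise : ∀ᵐ θ ∂W1,
        ENNReal.ofReal (q θ x) ≤ ENNReal.ofReal r * ENNReal.ofReal (q θ x₀) := by
      filter_upwards [hae] with θ hθ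
      rw [← ENNReal.ofReal_mul hrnn]
      apply ENNReal.ofReal_le_ofReal
      have hZMθ : 0 < ZM θ := by rw [hZMeq θ hθ.1]; exact hZpos θ hθ.1
      rw [hqdef]; simp only
      rw [hrdef, div_mul_div_comm]
      have hZMθpos : 0 < ZM θ := hZMθ
      have hkey : Real.exp (θ * φ x) * Real.exp (δ * φ x₀)
          ≤ Real.exp (θ * φ x₀) * Real.exp (δ * φ x) := by
        rw [← Real.exp_add, ← Real.exp_add]
        apply Real.exp_le_exp.2
        nlinarith [hθ.2, hle]
      have hfac : 0 ≤ p0 x * p0 x₀ := mul_nonneg (hp0nn x) (hp0nn x₀)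
      rw [div_le_div_iff₀ hZMθpos (by positivity)]
      nlinarith [mul_le_mul_of_nonneg_left hkey hfac,
        mul_le_mul_of_nonneg_left (mul_le_mul_of_nonneg_left hkey hfac) hZMθpos.le]
    have hFle : F x ≤ ENNReal.ofReal r * F x₀ := by
      rw [hFdef]; simp only
      calc ∫⁻ θ, ENNReal.ofReal (q θ x) ∂W1
          ≤ ∫⁻ θ, ENNReal.ofReal r * ENNReal.ofReal (q θ x₀) ∂W1 := lintegral_mono_ae hθwise
        _ = ENNReal.ofReal r * ∫⁻ θ, ENNReal.ofReal (q θ x₀) ∂W1 :=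
            lintegral_const_mul' _ _ ENNReal.ofReal_ne_top
    have hfin : ENNReal.ofReal r * F x₀ ≠ ⊤ := ENNReal.mul_ne_top ENNReal.ofReal_ne_top hF0fin.ne
    have h1 : pW x ≤ r * pW x₀ := by
      rw [hpWF x, hpWF x₀]
      calc (F x).toReal ≤ (ENNReal.ofReal r * F x₀).toReal := ENNReal.toReal_mono hfin hFle
        _ = r * (F x₀).toReal := by rw [ENNReal.toReal_mul, ENNReal.toReal_ofReal hrnn]
    calc pW x ≤ r * pW x₀ := h1
      _ = (Z δ * CC) * p δ x := by
          rw [hrdef, hCCdef, hpdef δ x]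
          field_simp
  -- Integrability of φ * pW
  set G : α → ℝ := fun x => pW x * Real.log (pW x / p 0 x) - (pW x - p δ x) - c * pW x
    with hGdef
  have hGint : Integrable G lam :=
    (hKL1.sub (hpWint.sub (hpθint δ hδΘ))).sub (hpWint.const_mul c)
  have hδφpWleG : ∀ x, δ * (φ x * pW x) ≤ G x := by
    intro x
    have h := hmaster x
    have e : pW x * (δ * φ x + c) = δ * (φ x * pW x) + c * pW x := by ring
    rw [hGdef]
    simp only
    linarith
  set K : ℝ := max (-(φ x₀)) 0 with hKdef
  have hKnn : 0 ≤ K := le_max_right _ _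
  have habs : ∀ x, |φ x * pW x| ≤ |G x| / δ + (Z δ * CC) * (|φ x| * p δ x) + K * pW x := by
    intro x
    have hpδnn := hpnn δ hδΘ x
    have h2 : 0 ≤ (Z δ * CC) * (|φ x| * p δ x) :=
      mul_nonneg (mul_nonneg hZδ.le hCCnn) (mul_nonneg (abs_nonneg _) hpδnn)
    have h3 : 0 ≤ K * pW x := mul_nonneg hKnn (hpWnn x)
    have h4 : 0 ≤ |G x| / δ := div_nonneg (abs_nonneg _) hδpos.le
    rcases le_total 0 (φ x) with hs | hs
    · have e1 : |φ x * pW x| = φ x * pW x := by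
        rw [abs_mul, abs_of_nonneg hs, abs_of_nonneg (hpWnn x)]
      rw [e1]
      have h1 : φ x * pW x ≤ |G x| / δ := by
        rw [le_div_iff₀ hδpos]
        calc φ x * pW x * δ = δ * (φ x * pW x) := by ring
          _ ≤ G x := hδφpWleG x
          _ ≤ |G x| := le_abs_self _
      linarith
    · have e1 : |φ x * pW x| = -φ x * pW x := by
        rw [abs_mul, abs_of_nonpos hs, abs_of_nonneg (hpWnn x)]
      rw [e1]
      rcases le_total (φ x) (φ x₀) with hle | hgt
      · have h5 : -φ x * pW x ≤ -φ x * ((Z δ * CC) * p δ x) :=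
          mul_le_mul_of_nonneg_left (hcomp x hle) (by linarith)
        have h6 : -φ x * ((Z δ * CC) * p δ x) ≤ (Z δ * CC) * (|φ x| * p δ x) := by
          have h7 : -φ x ≤ |φ x| := neg_le_abs _
          have e2 : -φ x * ((Z δ * CC) * p δ x) = (Z δ * CC) * (-φ x * p δ x) := by ring
          rw [e2]
          exact mul_le_mul_of_nonneg_left (mul_le_mul_of_nonneg_right h7 hpδnn)
            (mul_nonneg hZδ.le hCCnn)
        linarith
      · have h9 : -φ x ≤ K := le_trans (by linarith) (le_max_left _ _)
        have h10 : -φ x * pW x ≤ K * pW x := mul_le_mul_of_nonneg_right h9 (hpWnn x)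
        linarith
  have hφpδabs : Integrable (fun x => |φ x| * p δ x) lam := by
    have heq : (fun x => |φ x| * p δ x) = fun x => |φ x * p δ x| :=
      funext fun x => by rw [abs_mul, abs_of_nonneg (hpnn δ hδΘ x)]
    rw [heq]
    exact (hφpθ δ hδΘ).abs
  have hBint : Integrable
      (fun x => |G x| / δ + (Z δ * CC) * (|φ x| * p δ x) + K * pW x) lam :=
    ((hGint.abs.div_const δ).add (hφpδabs.const_mul (Z δ * CC))).add (hpWint.const_mul K)
  have hφpWint : Integrable (fun x => φ x * pW x) lam := by
    apply Integrable.mono' hBint (hφ.mul hpWmeas).aestronglyMeasurable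
    exact ae_of_all _ fun x => by rw [Real.norm_eq_abs]; exact habs x
  -- Fubini step
  have hΦmeas : Measurable (Function.uncurry fun x θ => φ x * q θ x) := by
    exact (hφ.comp measurable_fst).mul
      (((Real.measurable_exp.comp (measurable_snd.mul (hφ.comp measurable_fst))).mul
        (hp0.comp measurable_fst)).div (hZMmeas.comp measurable_snd))
  have hΦint : Integrable (Function.uncurry fun x θ => φ x * q θ x) (lam.prod W1) := by
    refine ⟨hΦmeas.aestronglyMeasurable, ?_⟩
    rw [hasFiniteIntegral_iff_norm]
    have hm : Measurable fun z : α × ℝ => ENNReal.ofReal ‖φ z.1 * q z.2 z.1‖ :=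
      hΦmeas.norm.ennreal_ofReal
    have hin : ∀ x, ∫⁻ θ, ENNReal.ofReal ‖φ x * q θ x‖ ∂W1 = ENNReal.ofReal |φ x| * F x := by
      intro x
      rw [hFdef]
      simp only
      rw [← lintegral_const_mul' _ _ ENNReal.ofReal_ne_top]
      apply lintegral_congr
      intro θ
      rw [← ENNReal.ofReal_mul (abs_nonneg _), Real.norm_eq_abs, abs_mul,
        abs_of_nonneg (hqnn θ x)]
    have h2 : ∫⁻ x, ENNReal.ofReal |φ x| * F x ∂lam
        = ∫⁻ x, ENNReal.ofReal ‖φ x * pW x‖ ∂lam := by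
      apply lintegral_congr_ae
      filter_upwards [hofRealpW] with x hx
      rw [← hx, ← ENNReal.ofReal_mul (abs_nonneg _), Real.norm_eq_abs, abs_mul,
        abs_of_nonneg (hpWnn x)]
    have h3 : ∫⁻ x, ENNReal.ofReal ‖φ x * pW x‖ ∂lam < ⊤ := by
      have := hφpWint.2
      rwa [hasFiniteIntegral_iff_norm] at this
    calc ∫⁻ z, ENNReal.ofReal ‖Function.uncurry (fun x θ => φ x * q θ x) z‖ ∂(lam.prod W1)
        = ∫⁻ x, ∫⁻ θ, ENNReal.ofReal ‖φ x * q θ x‖ ∂W1 ∂lam :=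
          lintegral_prod _ hm.aemeasurable
      _ = ∫⁻ x, ENNReal.ofReal |φ x| * F x ∂lam := lintegral_congr hin
      _ = ∫⁻ x, ENNReal.ofReal ‖φ x * pW x‖ ∂lam := h2
      _ < ⊤ := h3
  have hswap : ∫ x, (∫ θ, φ x * q θ x ∂W1) ∂lam = ∫ θ, (∫ x, φ x * q θ x ∂lam) ∂W1 :=
    integral_integral_swap hΦint
  have hL : ∫ x, (∫ θ, φ x * q θ x ∂W1) ∂lam = ∫ x, φ x * pW x ∂lam := by
    refine integral_congr_ae (ae_of_all _ fun x => ?_)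
    show ∫ θ, φ x * q θ x ∂W1 = φ x * pW x
    rw [integral_const_mul, ← hpWq x]
  have hint2 : Integrable (fun θ => ∫ x, φ x * q θ x ∂lam) W1 := hΦint.integral_prod_right
  have hR : mδ ≤ ∫ θ, (∫ x, φ x * q θ x ∂lam) ∂W1 := by
    have hge : ∀ᵐ θ ∂W1, mδ ≤ ∫ x, φ x * q θ x ∂lam := by
      filter_upwards [hae] with θ hθ
      have heq : ∫ x, φ x * q θ x ∂lam = ∫ x, φ x * p θ x ∂lam :=
        integral_congr_ae (ae_of_all _ fun x => by
          show φ x * q θ x = φ x * p θ x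
          rw [hqp θ hθ.1])
      rw [heq, hmδdef]
      exact hmono θ hθ.1 hθ.2
    have h := integral_mono_ae (integrable_const mδ) hint2 hge
    rwa [integral_const, probReal_univ, one_smul] at h
  have hstepG : mδ ≤ ∫ x, φ x * pW x ∂lam := by rw [← hL, hswap]; exact hR
  -- final chain
  rw [hDval, hDeq, hLval]
  have hRHSint : Integrable (fun x => (pW x - p δ x) + pW x * (δ * φ x + c)) lam := by
    have heq : (fun x => (pW x - p δ x) + pW x * (δ * φ x + c))
        = fun x => (pW x - p δ x) + (δ * (φ x * pW x) + c * pW x) := funext fun x => by ring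
    rw [heq]
    exact (hpWint.sub (hpθint δ hδΘ)).add ((hφpWint.const_mul δ).add (hpWint.const_mul c))
  have hRHSval : ∫ x, ((pW x - p δ x) + pW x * (δ * φ x + c)) ∂lam
      = δ * ∫ x, φ x * pW x ∂lam + c := by
    rw [show (fun x => (pW x - p δ x) + pW x * (δ * φ x + c))
        = fun x => (pW x - p δ x) + (δ * (φ x * pW x) + c * pW x) from
        funext fun x => by ring]
    have i1 : Integrable (fun x => pW x - p δ x) lam := hpWint.sub (hpθint δ hδΘ)
    have i2 : Integrable (fun x => δ * (φ x * pW x)) lam := hφpWint.const_mul δ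
    have i3 : Integrable (fun x => c * pW x) lam := hpWint.const_mul c
    have i4 : Integrable (fun x => δ * (φ x * pW x) + c * pW x) lam := i2.add i3
    have i5 : Integrable (fun x => pW x) lam := hpWint
    have i6 : Integrable (fun x => p δ x) lam := hpθint δ hδΘ
    rw [integral_add i1 i4, integral_sub i5 i6, integral_add i2 i3,
      integral_const_mul, integral_const_mul]
    have e5 : ∫ x, pW x ∂lam = 1 := hpWone
    have e6 : ∫ x, p δ x ∂lam = 1 := hpθone δ hδΘ
    rw [e5, e6]
    ring
  have hfinal := integral_mono hRHSint hKL1 hmaster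
  rw [hRHSval] at hfinal
  have hmul : δ * mδ ≤ δ * ∫ x, φ x * pW x ∂lam :=
    mul_le_mul_of_nonneg_left hstepG hδpos.le
  linarith
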